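/- arXiv:0910.4376 — 5 statements merged into one kernel-verified Lean document; each statement's English description precedes it below -/
import Mathlib

section
/- Let Γ be a finite simple graph and P a cycle in Γ (a closed walk v_1, v_2, ..., v_k, v_1). Define ν_P(O) for an acyclic orientation O as the number of edges of P oriented forward along the traversal minus the number oriented backward. Then ν_P is invariant under source-to-sink conversions: if O' is obtained from O by converting a source to a sink, then ν_P(O) = ν_P(O'). -/
variable {V : Type*}

/-- An acyclic orientation of a simple graph `G`. -/
structure AcyclicOrientation (G : SimpleGraph V) where
  dir : V → V → Prop
  dir_adj : ∀ {a b : V}, dir a b → G.Adj a b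
  total : ∀ {a b : V}, G.Adj a b → dir a b ∨ dir b a
  acyclic : ∀ a : V, ¬ Relation.TransGen dir a a

namespace AcyclicOrientation

variable {G : SimpleGraph V}

/-- `v` is a source: no edge points into `v`. -/
def IsSource (O : AcyclicOrientation G) (v : V) : Prop := ∀ a, ¬ O.dir a v

/-- `O'` is obtained from `O` by converting the source `v` into a sink. -/
def ClickAt (O : AcyclicOrientation G) (v : V) (O' : AcyclicOrientation G) : Prop :=
  O.IsSource v ∧ ∀ a b, (O'.dir a b ↔ (((a = v ∨ b = v) ∧ O.dir b a) ∨ (a ≠ v ∧ b ≠ v ∧ O.dir a b)))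

/-- One source-to-sink conversion relates `O` and `O'`. -/
def IsClick (O O' : AcyclicOrientation G) : Prop := ∃ v, O.ClickAt v O'

/-- Click-equivalence: reachability by a finite sequence of clicks. -/
def ClickEquiv (O O' : AcyclicOrientation G) : Prop :=
  Relation.ReflTransGen IsClick O O'

/-- `ClickSeq O c O'` : the list `c` is a click-sequence applicable to `O` with result `O'`. -/
inductive ClickSeq : AcyclicOrientation G → List V → AcyclicOrientation G → Prop
  | nil (O : AcyclicOrientation G) : ClickSeq O [] O
  | cons {O O' O'' : AcyclicOrientation G} {v : V} {c : List V} :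
      O.ClickAt v O' → ClickSeq O' c O'' → ClickSeq O (v :: c) O''

open scoped Classical in
/-- `ν_P(O)`: forward minus backward edges of the closed walk `p` under `O`. -/
noncomputable def nu (O : AcyclicOrientation G) {u : V} (p : G.Walk u u) : ℤ :=
  (p.darts.map (fun d => if O.dir d.toProd.1 d.toProd.2 then (1 : ℤ) else -1)).sum

/-- The `vw`-interval: vertices on a directed path from `v` to `w`. -/
def interval (O : AcyclicOrientation G) (v w : V) : Set V :=
  {a | Relation.ReflTransGen O.dir v a ∧ Relation.ReflTransGen O.dir a w}

end AcyclicOrientation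

open AcyclicOrientation

/-- The setoid of click-equivalence (equivalence relation generated by clicks). -/
def clickSetoid (G : SimpleGraph V) : Setoid (AcyclicOrientation G) :=
  ⟨Relation.EqvGen IsClick, Relation.EqvGen.is_equivalence _⟩

/-- `κ(G)`: the number of click-equivalence classes of acyclic orientations. -/
noncomputable def kappa (G : SimpleGraph V) : ℕ :=
  Nat.card (Quotient (clickSetoid G))

/-- The graph obtained from `G` by contracting the vertex set `I` to the single vertex `vI ∈ I`
(vertices of `I` other than `vI` become isolated). -/
def contractGraph (G : SimpleGraph V) (I : Set V) (vI : V) : SimpleGraph V where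
  Adj a b := a ≠ b ∧
    ((a ∉ I ∧ b ∉ I ∧ G.Adj a b) ∨
     (a = vI ∧ b ∉ I ∧ ∃ x ∈ I, G.Adj x b) ∨
     (b = vI ∧ a ∉ I ∧ ∃ x ∈ I, G.Adj x a))
  symm := by
    constructor
    rintro a b ⟨hne, h⟩
    refine ⟨hne.symm, ?_⟩
    rcases h with ⟨ha, hb, hadj⟩ | ⟨ha, hb, x, hx, hadj⟩ | ⟨hb, ha, x, hx, hadj⟩
    · exact Or.inl ⟨hb, ha, hadj.symm⟩
    · exact Or.inr (Or.inr ⟨ha, hb, x, hx, hadj⟩)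
    · exact Or.inr (Or.inl ⟨hb, ha, x, hx, hadj⟩)
  loopless := by constructor; rintro a ⟨hne, -⟩; exact hne rfl

/-- The orientation of the contracted graph induced by an orientation `O` of `G`. -/
def contractDir {G : SimpleGraph V} (O : AcyclicOrientation G) (I : Set V) (vI : V) :
    V → V → Prop := fun a b =>
  (a ∉ I ∧ b ∉ I ∧ O.dir a b) ∨
  (a = vI ∧ b ∉ I ∧ ∃ x ∈ I, O.dir x b) ∨
  (b = vI ∧ a ∉ I ∧ ∃ x ∈ I, O.dir a x)

/-- The orientation `i → j` iff `i` precedes `j` in the list `l`. -/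
def permDir (G : SimpleGraph V) [DecidableEq V] (l : List V) : V → V → Prop :=
  fun i j => G.Adj i j ∧ l.idxOf i < l.idxOf j

/-! Clicking `v` changes the sign of a dart `(a, b)` by `φ b - φ a`, where `φ = 2 · 𝟙_{v}`: the
darts leaving `v` go from `+1` to `-1`, those entering `v` from `-1` to `+1`, and all others keep
their sign. Along a closed walk these differences telescope to zero. -/

namespace SimpleGraph.Walk

variable {G : SimpleGraph V} {M : Type*} [AddCommGroup M]

theorem sum_map_darts_eq_add_sub {x y : V} (p : G.Walk x y) (w w' : G.Dart → M) (φ : V → M)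
    (h : ∀ d, w' d = w d + φ d.snd - φ d.fst) :
    (p.darts.map w').sum = (p.darts.map w).sum + φ y - φ x := by
  induction p with
  | nil => simp
  | cons hadj q ih =>
    simp only [darts_cons, List.map_cons, List.sum_cons, ih, h]
    abel

end SimpleGraph.Walk

namespace AcyclicOrientation

variable {G : SimpleGraph V} {O O' : AcyclicOrientation G} {v : V}

theorem IsSource.dir_of_adj (hv : O.IsSource v) {b : V} (hadj : G.Adj v b) : O.dir v b :=
  (O.total hadj).resolve_right (hv b)

theorem ClickAt.not_dir_from (h : O.ClickAt v O') (b : V) : ¬ O'.dir v b := by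
  rw [h.2]
  rintro (⟨-, hbv⟩ | ⟨hvv, -, -⟩)
  · exact h.1 b hbv
  · exact hvv rfl

theorem ClickAt.dir_to_of_adj (h : O.ClickAt v O') {a : V} (hadj : G.Adj a v) : O'.dir a v :=
  (h.2 a v).2 (Or.inl ⟨Or.inr rfl, h.1.dir_of_adj hadj.symm⟩)

theorem ClickAt.dir_iff_of_ne (h : O.ClickAt v O') {a b : V} (ha : a ≠ v) (hb : b ≠ v) :
    O'.dir a b ↔ O.dir a b := by
  rw [h.2]
  constructor
  · rintro (⟨hab, -⟩ | ⟨-, -, hd⟩)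
    · exact (hab.elim ha hb).elim
    · exact hd
  · exact fun hd => Or.inr ⟨ha, hb, hd⟩

open scoped Classical in
theorem ClickAt.sign_eq (h : O.ClickAt v O') {a b : V} (hadj : G.Adj a b) :
    (if O'.dir a b then (1 : ℤ) else -1) =
      (if O.dir a b then 1 else -1) + (Pi.single v 2 : V → ℤ) b - (Pi.single v 2 : V → ℤ) a := by
  by_cases ha : a = v
  · subst ha
    simp [h.not_dir_from b, h.1.dir_of_adj hadj, hadj.ne.symm]
  by_cases hb : b = v
  · subst hb
    simp [h.dir_to_of_adj hadj, h.1 a, ha]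
  simp [h.dir_iff_of_ne ha hb, ha, hb]

end AcyclicOrientation

theorem nu_invariant_under_click_general (G : SimpleGraph V)
    (O O' : AcyclicOrientation G) (v : V) (h : O.ClickAt v O')
    {u : V} (p : G.Walk u u) : nu O p = nu O' p := by
  classical
  have telescope := p.sum_map_darts_eq_add_sub _ _ _ fun d => h.sign_eq d.adj
  rw [add_sub_cancel_right] at telescope
  exact telescope.symm

/-- `ν_P` is invariant under source-to-sink conversions. -/
theorem nu_invariant_under_click [Fintype V] (G : SimpleGraph V)
    (O O' : AcyclicOrientation G) (v : V) (h : O.ClickAt v O')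
    {u : V} (p : G.Walk u u) : nu O p = nu O' p :=
  nu_invariant_under_click_general G O O' v h p
end

section
/- Let Γ be a finite simple graph with edge e = {v,w}, and let O^1, O^2 be acyclic orientations of Γ that are click-equivalent and both satisfy v ≤ w in the induced partial order. Then the intervals [v,w] in the posets induced by O^1 and O^2 coincide: a vertex lies on a directed path from v to w in O^1 if and only if it does in O^2, and moreover every directed path from v to w in O^1 is a directed path in O^2 and vice versa. -/
/-!
Let `ν_O(c)` count the forward minus the backward steps of a closed walk `c` under `O`
(`signedLength` below, the vertex-list form of `nu`). A click at a source `u` reverses exactly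
the edges at `u`, and a closed walk enters `u` as often as it leaves it, so `ν` is a click
invariant. Close a directed `v`–`w` path of length `k` in `O₁` by the edge `wv`: this closed walk
has `ν = k - 1` under `O₁`, hence under `O₂`; as `O₂` also orients the closing edge as `v → w`,
all `k` steps of the path must be forward in `O₂`. The interval `[v,w]` is the union of the
vertex sets of these paths.
-/

variable {V : Type*}

open AcyclicOrientation

namespace List

variable {α : Type*} {r : α → α → Prop} {a b c : α}

theorem relationReflTransGen_iff_exists_isChain :
    Relation.ReflTransGen r a b ↔ ∃ l, IsChain r l ∧ l.head? = some a ∧ l.getLast? = some b := by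
  constructor
  · intro h
    obtain ⟨l, hl, hlast⟩ := exists_isChain_cons_of_relationReflTransGen h
    exact ⟨a :: l, hl, rfl, by rw [getLast?_eq_some_getLast (cons_ne_nil a l), hlast]⟩
  · rintro ⟨_ | ⟨a', l⟩, hl, hhead, hlast⟩
    · simp at hhead
    · obtain rfl : a' = a := by simpa using hhead
      refine relationReflTransGen_of_exists_isChain_cons l hl ?_
      simpa [getLast?_eq_getLast_of_ne_nil] using hlast

theorem relationReflTransGen_and_iff_exists_isChain_mem :
    Relation.ReflTransGen r a b ∧ Relation.ReflTransGen r b c ↔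
      ∃ l, IsChain r l ∧ l.head? = some a ∧ l.getLast? = some c ∧ b ∈ l := by
  simp only [relationReflTransGen_iff_exists_isChain, mem_iff_append]
  constructor
  · rintro ⟨⟨l₁, hl₁, hhead, hlast₁⟩, ⟨l₂, hl₂, hhead₂, hlast⟩⟩
    obtain ⟨s, rfl⟩ := getLast?_eq_some_iff.mp hlast₁
    obtain ⟨t, rfl⟩ := head?_eq_some_iff.mp hhead₂
    refine ⟨s ++ b :: t, isChain_split.mpr ⟨hl₁, hl₂⟩, ?_, ?_, s, t, rfl⟩
    · simpa using hhead
    · simpa using hlast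
  · rintro ⟨_, hl, hhead, hlast, s, t, rfl⟩
    obtain ⟨hs, ht⟩ := isChain_split.mp hl
    exact ⟨⟨s ++ [b], hs, by simpa using hhead, by simp⟩, ⟨b :: t, ht, rfl, by simpa using hlast⟩⟩

end List

namespace AcyclicOrientation

variable {G : SimpleGraph V} {O O' O₁ O₂ : AcyclicOrientation G} {u v w : V}

theorem mem_interval_iff {x : V} :
    x ∈ O.interval v w ↔
      ∃ l : List V, l.IsChain O.dir ∧ l.head? = some v ∧ l.getLast? = some w ∧ x ∈ l :=
  List.relationReflTransGen_and_iff_exists_isChain_mem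

theorem dir_asymm {a b : V} (h : O.dir a b) : ¬ O.dir b a :=
  fun h' => O.acyclic a (.tail (.single h) h')

open scoped Classical in
noncomputable def edgeSign (O : AcyclicOrientation G) (a b : V) : ℤ :=
  if O.dir a b then 1 else -1

noncomputable def signedLength (O : AcyclicOrientation G) : List V → ℤ
  | a :: b :: l => O.edgeSign a b + O.signedLength (b :: l)
  | _ => 0

theorem signedLength_le_length (a : V) (l : List V) : O.signedLength (a :: l) ≤ l.length := by
  induction l generalizing a with
  | nil => simp [signedLength]
  | cons b l ih =>
    have hab : O.edgeSign a b ≤ 1 := by unfold edgeSign; split_ifs <;> norm_num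
    simp only [signedLength, List.length_cons, Nat.cast_succ]
    linarith [ih b]

theorem signedLength_eq_length_iff (a : V) (l : List V) :
    O.signedLength (a :: l) = l.length ↔ (a :: l).IsChain O.dir := by
  induction l generalizing a with
  | nil => simp [signedLength]
  | cons b l ih =>
    rw [List.isChain_cons_cons, ← ih b]
    have hle := O.signedLength_le_length b l
    simp only [signedLength, List.length_cons, Nat.cast_succ, edgeSign]
    split_ifs with hab
    · simp only [hab, true_and]; omega
    · simp only [hab, false_and, iff_false]; omega

open scoped Classical in
theorem ClickAt.edgeSign_sub (hc : O.ClickAt u O') {a b : V} (hab : G.Adj a b) :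
    O'.edgeSign a b - O.edgeSign a b =
      2 * ((if b = u then 1 else 0) - (if a = u then 1 else 0)) := by
  obtain ⟨hsrc, hdir⟩ := hc
  unfold edgeSign
  by_cases hb : b = u
  · subst hb
    have h' : O'.dir a b := (hdir a b).2 (.inl ⟨.inr rfl, (O.total hab).resolve_left (hsrc a)⟩)
    simp [hsrc a, h', hab.ne]
  by_cases ha : a = u
  · subst ha
    have h' : ¬ O'.dir a b := by
      rw [hdir]
      rintro (⟨-, hba⟩ | ⟨hne, -⟩)
      exacts [hsrc b hba, hne rfl]
    simp [(O.total hab).resolve_right (hsrc b), h', hb]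
  · have h' : O'.dir a b ↔ O.dir a b := by simp [hdir, ha, hb]
    simp [h', ha, hb]

open scoped Classical in
theorem ClickAt.signedLength_sub (hc : O.ClickAt u O') :
    ∀ {l : List V}, l.IsChain G.Adj → O'.signedLength l - O.signedLength l =
      2 * ((if l.getLast? = some u then 1 else 0) - (if l.head? = some u then 1 else 0))
  | [], _ | [_], _ => by simp [signedLength]
  | a :: b :: l, hl => by
    rw [List.isChain_cons_cons] at hl
    have ih := hc.signedLength_sub hl.2
    simp only [signedLength, List.getLast?_cons_cons, List.head?_cons, Option.some.injEq] at ih ⊢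
    linarith [hc.edgeSign_sub hl.1]

theorem ClickEquiv.signedLength_eq_of_closed (h : ClickEquiv O O') {l : List V}
    (hl : l.IsChain G.Adj) (hclosed : l.head? = l.getLast?) :
    O.signedLength l = O'.signedLength l := by
  induction h with
  | refl => rfl
  | tail _ hclick ih =>
    obtain ⟨u, hu⟩ := hclick
    have := hu.signedLength_sub hl
    rw [hclosed, sub_self, mul_zero, sub_eq_zero] at this
    rw [ih, this]

theorem isChain_dir_of_signedLength_eq (h₁ : O₁.dir v w) (h₂ : O₂.dir v w) {t : List V}
    (ht : (v :: t).IsChain O₁.dir)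
    (hS : O₁.signedLength (w :: v :: t) = O₂.signedLength (w :: v :: t)) :
    (v :: t).IsChain O₂.dir := by
  rw [← signedLength_eq_length_iff] at ht ⊢
  have hw₁ : O₁.edgeSign w v = -1 := if_neg (dir_asymm h₁)
  have hw₂ : O₂.edgeSign w v = -1 := if_neg (dir_asymm h₂)
  simp only [signedLength, hw₁, hw₂] at hS
  linarith

theorem ClickEquiv.isChain_dir_iff (h : ClickEquiv O₁ O₂) (h₁ : O₁.dir v w) (h₂ : O₂.dir v w)
    {l : List V} (hhead : l.head? = some v) (hlast : l.getLast? = some w) :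
    l.IsChain O₁.dir ↔ l.IsChain O₂.dir := by
  obtain ⟨t, rfl⟩ := List.head?_eq_some_iff.mp hhead
  have hclosed (O : AcyclicOrientation G) (ht : (v :: t).IsChain O.dir) :
      O₁.signedLength (w :: v :: t) = O₂.signedLength (w :: v :: t) :=
    h.signedLength_eq_of_closed ((ht.imp fun _ _ => O.dir_adj).cons_cons (O₁.dir_adj h₁).symm)
      (by simpa using hlast.symm)
  exact ⟨fun ht => isChain_dir_of_signedLength_eq h₁ h₂ ht (hclosed O₁ ht),
    fun ht => isChain_dir_of_signedLength_eq h₂ h₁ ht (hclosed O₂ ht).symm⟩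

end AcyclicOrientation

theorem interval_well_defined_general (G : SimpleGraph V) (v w : V)
    (O₁ O₂ : AcyclicOrientation G) (h : ClickEquiv O₁ O₂)
    (h1 : O₁.dir v w) (h2 : O₂.dir v w) :
    interval O₁ v w = interval O₂ v w ∧
      ∀ l : List V, l.head? = some v → l.getLast? = some w →
        (List.Chain' O₁.dir l ↔ List.Chain' O₂.dir l) := by
  have hpaths {l : List V} (hhead : l.head? = some v) (hlast : l.getLast? = some w) :
      l.IsChain O₁.dir ↔ l.IsChain O₂.dir :=
    h.isChain_dir_iff h1 h2 hhead hlast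
  refine ⟨Set.ext fun x => ?_, fun l => hpaths⟩
  simp only [mem_interval_iff]
  exact exists_congr fun l => and_congr_left fun ⟨hhead, hlast, _⟩ => hpaths hhead hlast

/-- For click-equivalent orientations both orienting the edge `{v,w}` as `(v,w)`, the intervals
`[v,w]` coincide, and the directed `v`–`w` paths agree. -/
theorem interval_well_defined [Fintype V] (G : SimpleGraph V) (v w : V) (hvw : G.Adj v w)
    (O₁ O₂ : AcyclicOrientation G) (h : ClickEquiv O₁ O₂)
    (h1 : O₁.dir v w) (h2 : O₂.dir v w) :
    interval O₁ v w = interval O₂ v w ∧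
      ∀ l : List V, l.head? = some v → l.getLast? = some w →
        (List.Chain' O₁.dir l ↔ List.Chain' O₂.dir l) :=
  interval_well_defined_general G v w O₁ O₂ h h1 h2
end

section
/- Let O be an acyclic orientation of a finite simple graph Γ, let c = c_1 c_2 ⋯ c_m be a click-sequence applicable to O (each c_i is a source of the orientation obtained after applying c_1,...,c_{i-1}), and let (v_1, v_2) be a directed edge of O. Then in the sequence c, the occurrences of v_1 and v_2 alternate, with v_1 appearing first (if either appears at all). -/
variable {V : Type*}

open AcyclicOrientation

/-! A click at `v` reverses exactly the edges at `v`, and only a source can be clicked. So the edge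
between `v₁` and `v₂` is never clicked at its head; a click at its tail reverses it, exchanging the
roles of `v₁` and `v₂` for the rest of the sequence, and any other click leaves it alone. -/

namespace AcyclicOrientation

variable {G : SimpleGraph V} {O O' : AcyclicOrientation G} {v a b : V}

theorem ClickAt.ne_of_dir (hv : O.ClickAt v O') (hab : O.dir a b) : b ≠ v := by
  rintro rfl
  exact hv.1 a hab

theorem ClickAt.dir_swap (hv : O.ClickAt v O') (hvb : O.dir v b) : O'.dir b v :=
  (hv.2 b v).2 (Or.inl ⟨Or.inr rfl, hvb⟩)

theorem ClickAt.dir_of_ne (hv : O.ClickAt v O') (hab : O.dir a b) (ha : a ≠ v) (hb : b ≠ v) :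
    O'.dir a b :=
  (hv.2 a b).2 (Or.inr ⟨ha, hb, hab⟩)

end AcyclicOrientation

theorem List.get_cons_eq_alternating {α : Type*} {a b : α} {l : List α}
    (hl : ∀ (i : ℕ) (hi : i < l.length), l.get ⟨i, hi⟩ = if i % 2 = 0 then b else a) :
    ∀ (i : ℕ) (hi : i < (a :: l).length),
      (a :: l).get ⟨i, hi⟩ = if i % 2 = 0 then a else b
  | 0, _ => rfl
  | i + 1, hi => by
    rw [List.get_cons_succ, hl i (by simpa using hi)]
    rcases Nat.mod_two_eq_zero_or_one i with h | h <;>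
      simp [h, Nat.succ_mod_two_eq_zero_iff]

theorem click_sequence_alternates_general [DecidableEq V] (G : SimpleGraph V)
    (O O₂ : AcyclicOrientation G) (c : List V) (h : ClickSeq O c O₂)
    (v₁ v₂ : V) (hd : O.dir v₁ v₂) :
    ∀ (i : ℕ) (hi : i < (c.filter (fun z => decide (z = v₁ ∨ z = v₂))).length),
      (c.filter (fun z => decide (z = v₁ ∨ z = v₂))).get ⟨i, hi⟩ =
        if i % 2 = 0 then v₁ else v₂ := by
  induction h generalizing v₁ v₂ with
  | nil => simp
  | @cons O O' _ v c hv _ ih =>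
    have hv₂ : v₂ ≠ v := hv.ne_of_dir hd
    by_cases hv₁ : v₁ = v
    · subst hv₁
      have ih' := ih v₂ v₁ (hv.dir_swap hd)
      have hswap : (fun z => decide (z = v₂ ∨ z = v₁)) = fun z => decide (z = v₁ ∨ z = v₂) := by
        simp only [or_comm]
      rw [hswap] at ih'
      rw [List.filter_cons_of_pos (by simp)]
      exact List.get_cons_eq_alternating ih'
    · simpa [Ne.symm hv₁, Ne.symm hv₂] using ih v₁ v₂ (hv.dir_of_ne hd hv₁ hv₂)

/-- In a click-sequence, the occurrences of the endpoints of a directed edge `(v₁, v₂)` of `O`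
alternate, with `v₁` first. -/
theorem click_sequence_alternates [Fintype V] [DecidableEq V] (G : SimpleGraph V)
    (O O₂ : AcyclicOrientation G) (c : List V) (h : ClickSeq O c O₂)
    (v₁ v₂ : V) (hd : O.dir v₁ v₂) :
    ∀ (i : ℕ) (hi : i < (c.filter (fun z => decide (z = v₁ ∨ z = v₂))).length),
      (c.filter (fun z => decide (z = v₁ ∨ z = v₂))).get ⟨i, hi⟩ =
        if i % 2 = 0 then v₁ else v₂ :=
  click_sequence_alternates_general G O O₂ c h v₁ v₂ hd
end

section
/- Let Γ be a finite simple graph with edge {v,w}, O an acyclic orientation with v ≤_O w, and c = c_1⋯c_m a click-sequence starting with c_1 = v that contains every vertex of the interval I(O) = [v,w] at least once. Then every vertex of I(O) appears in c before any vertex of I(O) appears a second time. -/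
variable {V : Type*}

open AcyclicOrientation

/-!
Along a directed edge `a → b` the clicks of `a` and `b` alternate, starting with `a`: `b` cannot
be clicked while `a → b`, and clicking `a` reverses that edge. So click counts in any
click-sequence weakly decrease along directed paths and drop by at most one along an edge.
If some `x ∈ [v, w]` is clicked a second time at position `j`, the prefix ending there clicks
`v ≤ x` at least twice, hence `w` at least once (across the edge `v → w`), hence every
`z ≤ w` at least once.
-/

namespace AcyclicOrientation.ClickSeq

variable {G : SimpleGraph V} {O O₂ : AcyclicOrientation G} {c : List V}

theorem exists_take (h : ClickSeq O c O₂) (n : ℕ) : ∃ O', ClickSeq O (c.take n) O' := by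
  induction h generalizing n with
  | nil O => exact ⟨O, by simpa using ClickSeq.nil O⟩
  | cons hclick _ ih =>
    cases n with
    | zero => exact ⟨_, ClickSeq.nil _⟩
    | succ m =>
      obtain ⟨O', h'⟩ := ih m
      exact ⟨O', ClickSeq.cons hclick h'⟩

variable [DecidableEq V]

theorem count_le_count_of_dir (h : ClickSeq O c O₂) {a b : V} (hab : O.dir a b) :
    c.count b ≤ c.count a ∧ c.count a ≤ c.count b + 1 := by
  induction h generalizing a b with
  | nil O => simp
  | @cons O O' _ u _ hclick _ ih =>
    obtain ⟨hsrc, hdir⟩ := hclick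
    have hub : u ≠ b := by rintro rfl; exact hsrc a hab
    by_cases hua : u = a
    · subst hua
      have hba : O'.dir b u := (hdir b u).2 (Or.inl ⟨Or.inr rfl, hab⟩)
      have := ih hba
      simp only [List.count_cons_self, List.count_cons_of_ne hub]
      omega
    · have hab' : O'.dir a b := (hdir a b).2 (Or.inr ⟨Ne.symm hua, Ne.symm hub, hab⟩)
      simpa only [List.count_cons_of_ne hua, List.count_cons_of_ne hub] using ih hab'

theorem count_le_count_of_reflTransGen (h : ClickSeq O c O₂) {a b : V}
    (hab : Relation.ReflTransGen O.dir a b) : c.count b ≤ c.count a := by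
  induction hab with
  | refl => exact le_rfl
  | tail _ hmb ih => exact (h.count_le_count_of_dir hmb).1.trans ih

theorem mem_of_two_le_count_of_mem_interval (h : ClickSeq O c O₂) {v w x z : V}
    (hvw : O.dir v w) (hx : x ∈ O.interval v w) (hcx : 2 ≤ c.count x)
    (hz : z ∈ O.interval v w) : z ∈ c := by
  have hcv : 2 ≤ c.count v := hcx.trans (h.count_le_count_of_reflTransGen hx.1)
  have hcw : 1 ≤ c.count w := by have := (h.count_le_count_of_dir hvw).2; omega
  exact List.one_le_count_iff.1 (hcw.trans (h.count_le_count_of_reflTransGen hz.2))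

end AcyclicOrientation.ClickSeq

theorem List.two_le_count_take_succ {α : Type*} [DecidableEq α] {l : List α}
    {i j : Fin l.length} (hij : i < j) (hget : l.get i = l.get j) :
    2 ≤ (l.take (j + 1)).count (l.get j) := by
  have hmem : l.get j ∈ l.take j :=
    List.mem_take_iff_getElem.2 ⟨i, by simp [hij], hget⟩
  rw [← List.take_concat_get' l j j.isLt, List.count_append]
  have := List.one_le_count_iff.2 hmem
  simp only [List.get_eq_getElem, List.count_singleton_self] at this ⊢
  omega

theorem List.exists_lt_get_eq_or_eq_of_mem_take_succ {α : Type*} {l : List α}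
    {j : Fin l.length} {z : α} (hz : z ∈ l.take (j + 1)) :
    (∃ k : Fin l.length, k < j ∧ l.get k = z) ∨ l.get j = z := by
  obtain ⟨k, hk, rfl⟩ := List.mem_take_iff_getElem.1 hz
  have hk' : k < l.length := hk.trans_le (min_le_right _ _)
  rcases (Nat.lt_succ_iff.1 (hk.trans_le (min_le_left _ _))).lt_or_eq with hlt | rfl
  · exact Or.inl ⟨⟨k, hk'⟩, hlt, rfl⟩
  · exact Or.inr rfl

theorem interval_vertices_before_repeats_general (G : SimpleGraph V) (v w : V)
    (O O₂ : AcyclicOrientation G) (hd : O.dir v w)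
    (c : List V) (h : ClickSeq O c O₂) :
    ∀ j : Fin c.length, c.get j ∈ interval O v w →
      (∃ i : Fin c.length, i < j ∧ c.get i = c.get j) →
      ∀ z ∈ interval O v w, ∃ k : Fin c.length, k < j ∧ c.get k = z := by
  classical
  rintro j hj ⟨i, hij, hrep⟩ z hz
  obtain ⟨O', hprefix⟩ := h.exists_take (j + 1)
  have hzmem : z ∈ c.take (j + 1) :=
    hprefix.mem_of_two_le_count_of_mem_interval hd hj (List.two_le_count_take_succ hij hrep) hz
  rcases List.exists_lt_get_eq_or_eq_of_mem_take_succ hzmem with hbefore | rfl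
  · exact hbefore
  · exact ⟨i, hij, hrep⟩

/-- If a click-sequence starts at `v` and contains every vertex of the `vw`-interval, then every
vertex of the interval appears before any vertex of the interval appears a second time. -/
theorem interval_vertices_before_repeats [Fintype V] (G : SimpleGraph V) (v w : V)
    (hvw : G.Adj v w) (O O₂ : AcyclicOrientation G) (hd : O.dir v w)
    (c : List V) (h : ClickSeq O c O₂)
    (hhead : c.head? = some v)
    (hall : ∀ z ∈ interval O v w, z ∈ c) :
    ∀ j : Fin c.length, c.get j ∈ interval O v w →
      (∃ i : Fin c.length, i < j ∧ c.get i = c.get j) →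
      ∀ z ∈ interval O v w, ∃ k : Fin c.length, k < j ∧ c.get k = z :=
  interval_vertices_before_repeats_general G v w O O₂ hd c h
end

section
/- Let Γ be a finite simple graph, let e = {v,w} be an edge, and let O be an acyclic orientation of Γ with the edge oriented (v,w). Suppose c = c_1⋯c_m is a click-sequence applicable to O containing exactly one occurrence of w and no occurrences of vertices from the vw-interval I(O) after that occurrence of w. Then there exists a click-sequence c' = c'_1⋯c'_m with the same image c'(O) = c(O) and an interval [p,q] of indices such that c'_j ∈ I(O) if and only if p ≤ j ≤ q. -/
variable {V : Type*}

open AcyclicOrientation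

/-!
Along a click-sequence the click counts at the two ends of an edge `x → y` differ by at most one,
and the edge is reversed exactly when `x` has been clicked once more than `y`. As `v → w`, `w` is
clicked once and no interval vertex is clicked after it, every interval vertex is clicked exactly
once. So if `y` is clicked for the first time and `w` is reachable from `y`, every earlier click
adjacent to it is the first click of an in-neighbour of `y`, from which `w` is again reachable.
Call the first click of a vertex outside the interval from which `w` is reachable leading. Moving
the leading clicks to the front, then the interval clicks, then the rest, each block in its
original order, only makes clicks overtake clicks at distinct non-adjacent vertices, and such
clicks commute.
-/

theorem List.count_take_lt_count_take {α : Type*} [BEq α] [LawfulBEq α] {l : List α} {i j : ℕ}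
    (hi : i < l.length) (hij : i < j) : (l.take i).count l[i] < (l.take j).count l[i] := by
  calc (l.take i).count l[i] < (l.take i ++ [l[i]]).count l[i] := by
        rw [List.count_append, List.count_singleton_self]; omega
    _ = (l.take (i + 1)).count l[i] := by rw [List.take_concat_get' l i hi]
    _ ≤ (l.take j).count l[i] := (List.take_sublist_take_left hij).count_le _

theorem List.exists_interval_of_append {α : Type*} (P : α → Prop) {X Y Z : List α}
    (hX : ∀ x ∈ X, ¬ P x) (hY : ∀ y ∈ Y, P y) (hZ : ∀ z ∈ Z, ¬ P z) :
    ∃ p q : ℕ, ∀ j : Fin (X ++ (Y ++ Z)).length,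
      (P ((X ++ (Y ++ Z)).get j) ↔ p ≤ j.val ∧ j.val ≤ q) := by
  cases Y with
  | nil =>
    refine ⟨1, 0, fun j => iff_of_false ?_ (by omega)⟩
    have := List.get_mem (X ++ Z) j
    grind
  | cons y Y =>
    refine ⟨X.length, X.length + Y.length, fun j => ?_⟩
    have hj := j.isLt
    simp only [List.length_append, List.length_cons] at hj
    simp only [List.get_eq_getElem]
    rcases lt_or_ge j.val X.length with hjX | hjX
    · rw [List.getElem_append_left hjX]
      exact iff_of_false (hX _ (List.getElem_mem _)) (by omega)
    rw [List.getElem_append_right hjX]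
    rcases lt_or_ge (j.val - X.length) (Y.length + 1) with hjY | hjY
    · rw [List.getElem_append_left (by simpa using hjY)]
      exact iff_of_true (hY _ (List.getElem_mem _)) (by omega)
    · rw [List.getElem_append_right (by simpa using hjY)]
      exact iff_of_false (hZ _ (List.getElem_mem _)) (by omega)

namespace AcyclicOrientation

variable {G : SimpleGraph V}

lemma dir_irrefl (O : AcyclicOrientation G) (a : V) : ¬ O.dir a a :=
  fun h => G.loopless.irrefl a (O.dir_adj h)

lemma not_dir_of_dir (O : AcyclicOrientation G) {a b : V} (h : O.dir a b) : ¬ O.dir b a :=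
  fun h' => O.acyclic a (.tail (.single h) h')

lemma dir_iff_not_dir (O : AcyclicOrientation G) {a b : V} (hab : G.Adj a b) :
    O.dir a b ↔ ¬ O.dir b a :=
  ⟨O.not_dir_of_dir, (O.total hab).resolve_right⟩

def clickDir (O : AcyclicOrientation G) (z : V) (a b : V) : Prop :=
  ((a = z ∨ b = z) ∧ O.dir b a) ∨ (a ≠ z ∧ b ≠ z ∧ O.dir a b)

lemma clickDir_of_ne_right (O : AcyclicOrientation G) {z a b : V} (hz : O.IsSource z)
    (h : O.clickDir z a b) (hb : b ≠ z) : a ≠ z ∧ O.dir a b := by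
  rcases h with ⟨rfl | rfl, h⟩ | ⟨ha, -, h⟩
  · exact absurd h (hz b)
  · exact absurd rfl hb
  · exact ⟨ha, h⟩

def click (O : AcyclicOrientation G) (z : V) (hz : O.IsSource z) : AcyclicOrientation G where
  dir := O.clickDir z
  dir_adj := by
    rintro a b (⟨-, h⟩ | ⟨-, -, h⟩)
    exacts [(O.dir_adj h).symm, O.dir_adj h]
  total := by
    intro a b hab
    unfold clickDir
    by_cases ha : a = z <;> by_cases hb : b = z <;> rcases O.total hab with h | h <;> simp_all
  acyclic := by
    -- a cycle through `z` would leave the sink `z`; any other cycle is a cycle of `O`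
    have hback : ∀ a b, Relation.TransGen (O.clickDir z) a b → b ≠ z →
        a ≠ z ∧ Relation.TransGen O.dir a b := by
      intro a b hab
      induction hab with
      | single h => exact fun hb => (O.clickDir_of_ne_right hz h hb).imp_right .single
      | tail _ h ih =>
        intro hc
        obtain ⟨hb, hbc⟩ := O.clickDir_of_ne_right hz h hc
        exact (ih hb).imp_right (·.tail hbc)
    intro a ha
    by_cases haz : a = z
    · subst haz
      obtain ⟨b, ⟨-, hb⟩ | ⟨hb, -, -⟩, -⟩ := Relation.TransGen.head'_iff.mp ha
      exacts [hz b hb, hb rfl]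
    · exact O.acyclic a (hback a a ha haz).2

lemma clickAt_click (O : AcyclicOrientation G) (z : V) (hz : O.IsSource z) :
    O.ClickAt z (O.click z hz) :=
  ⟨hz, fun _ _ => Iff.rfl⟩

lemma ClickAt.isSource_iff {O O' : AcyclicOrientation G} {x y : V} (h : O.ClickAt y O')
    (hxy : x ≠ y) (hadj : ¬ G.Adj x y) : O'.IsSource x ↔ O.IsSource x := by
  have hdir : ∀ a, O'.dir a x ↔ O.dir a x := by
    intro a
    rw [h.2 a x]
    have : a = y → ¬ O.dir a x := by rintro rfl hd; exact hadj (O.dir_adj hd).symm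
    have : a = y → ¬ O.dir x a := by rintro rfl hd; exact hadj (O.dir_adj hd)
    by_cases hay : a = y <;> simp_all
  exact forall_congr' fun a => not_congr (hdir a)

lemma ClickAt.swap {O O₁ O₂ : AcyclicOrientation G} {x y : V}
    (h₁ : O.ClickAt x O₁) (h₂ : O₁.ClickAt y O₂) (hxy : x ≠ y) (hadj : ¬ G.Adj x y) :
    ∃ P, O.ClickAt y P ∧ P.ClickAt x O₂ := by
  have hy : O.IsSource y := (h₁.isSource_iff hxy.symm fun h => hadj h.symm).mp h₂.1
  refine ⟨O.click y hy, O.clickAt_click y hy,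
    ((O.clickAt_click y hy).isSource_iff hxy hadj).mpr h₁.1, fun a b => ?_⟩
  have := O.dir_irrefl a
  have := O.dir_irrefl b
  have : ¬ O.dir x y := fun h => hadj (O.dir_adj h)
  have : ¬ O.dir y x := fun h => hadj (O.dir_adj h).symm
  show _ ↔ ((a = x ∨ b = x) ∧ O.clickDir y b a) ∨ (a ≠ x ∧ b ≠ x ∧ O.clickDir y a b)
  simp only [h₂.2, h₁.2, clickDir]
  by_cases hax : a = x <;> by_cases hbx : b = x <;> by_cases hay : a = y <;>
    by_cases hby : b = y <;> subst_eqs <;> simp_all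

namespace ClickSeq

lemma append {O O₁ O₂ : AcyclicOrientation G} {l r : List V} (hl : ClickSeq O l O₁)
    (hr : ClickSeq O₁ r O₂) : ClickSeq O (l ++ r) O₂ := by
  induction hl with
  | nil => exact hr
  | cons hc _ ih => exact .cons hc (ih hr)

lemma exists_of_append {O O₂ : AcyclicOrientation G} {l r : List V}
    (h : ClickSeq O (l ++ r) O₂) : ∃ Q, ClickSeq O l Q ∧ ClickSeq Q r O₂ := by
  induction l generalizing O with
  | nil => exact ⟨O, .nil O, h⟩
  | cons x l ih =>
    obtain _ | ⟨hc, h⟩ := h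
    obtain ⟨Q, hl, hr⟩ := ih h
    exact ⟨Q, .cons hc hl, hr⟩

lemma append_cons_of_cons_append {O O₂ : AcyclicOrientation G} {z : V} {a b : List V}
    (h : ClickSeq O (z :: (a ++ b)) O₂) (ha : ∀ y ∈ a, y ≠ z ∧ ¬ G.Adj z y) :
    ClickSeq O (a ++ z :: b) O₂ := by
  induction a generalizing O with
  | nil => exact h
  | cons y a ih =>
    obtain _ | ⟨hz, _ | ⟨hy, h⟩⟩ := h
    obtain ⟨hyz, hadj⟩ := ha y (List.mem_cons_self ..)
    obtain ⟨P, hyP, hzP⟩ := hz.swap hy hyz.symm hadj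
    exact .cons hyP (ih (.cons hzP h) fun u hu => ha u (List.mem_cons_of_mem y hu))

lemma map_filter_append {α : Type*} (f : α → V) (p : α → Bool)
    {O O₂ : AcyclicOrientation G} {A : List α}
    (hA : A.Pairwise fun a b => p a = false → p b = true → f b ≠ f a ∧ ¬ G.Adj (f a) (f b))
    (h : ClickSeq O (A.map f) O₂) :
    ClickSeq O ((A.filter p).map f ++ (A.filter fun a => !p a).map f) O₂ := by
  induction A generalizing O with
  | nil => simpa using h
  | cons a A ih =>
    rw [List.pairwise_cons] at hA
    obtain _ | ⟨ha, h⟩ := h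
    have hrest := ih hA.2 h
    cases hpa : p a
    · simp only [List.filter_cons, hpa, Bool.not_false, Bool.false_eq_true, ↓reduceIte,
        List.map_cons]
      refine append_cons_of_cons_append (.cons ha hrest) ?_
      intro y hy
      obtain ⟨b, hb, rfl⟩ := List.mem_map.mp hy
      rw [List.mem_filter] at hb
      exact hA.1 b hb.1 hpa hb.2
    · simpa [hpa] using ClickSeq.cons ha hrest

lemma exists_take_drop {O O₂ : AcyclicOrientation G} {l : List V} (h : ClickSeq O l O₂)
    (i : ℕ) :
    ∃ Q, ClickSeq O (l.take i) Q ∧ ClickSeq Q (l.drop i) O₂ :=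
  exists_of_append (by rwa [List.take_append_drop])

end ClickSeq

section Count

variable [DecidableEq V]

namespace ClickSeq

lemma count_dir_invariant {O Q : AcyclicOrientation G} {l : List V} (h : ClickSeq O l Q)
    {x y : V} (hxy : O.dir x y) :
    l.count y ≤ l.count x ∧ l.count x ≤ l.count y + 1 ∧
      (Q.dir x y ↔ l.count x = l.count y) := by
  induction h generalizing x y with
  | nil O => simp [hxy]
  | @cons O O' Q z l hz _ ih =>
    have hzy : z ≠ y := by rintro rfl; exact hz.1 x hxy
    by_cases hzx : z = x
    · subst hzx
      obtain ⟨h₁, h₂, hiff⟩ := ih ((hz.2 y z).mpr (Or.inl ⟨Or.inr rfl, hxy⟩))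
      rw [List.count_cons_self, List.count_cons_of_ne hzy, Q.dir_iff_not_dir (O.dir_adj hxy), hiff]
      omega
    · have := ih ((hz.2 x y).mpr (Or.inr ⟨Ne.symm hzx, Ne.symm hzy, hxy⟩))
      rwa [List.count_cons_of_ne hzx, List.count_cons_of_ne hzy]

lemma count_le_count_of_reflTransGen_s11 {O Q : AcyclicOrientation G} {l : List V}
    (h : ClickSeq O l Q) {x y : V} (hxy : Relation.ReflTransGen O.dir x y) :
    l.count y ≤ l.count x := by
  induction hxy with
  | refl => rfl
  | tail _ hyz ih => exact (h.count_dir_invariant hyz).1.trans ih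

lemma count_of_isSource {O Q : AcyclicOrientation G} {l : List V} (h : ClickSeq O l Q) {z u : V}
    (hz : Q.IsSource z) :
    (O.dir u z → l.count u = l.count z + 1) ∧ (O.dir z u → l.count u = l.count z) := by
  refine ⟨fun hd => ?_, fun hd => ?_⟩
  · obtain ⟨h₁, h₂, hiff⟩ := h.count_dir_invariant hd
    have := mt hiff.mpr (hz u)
    omega
  · exact ((h.count_dir_invariant hd).2.2.mp ((Q.total (O.dir_adj hd)).resolve_right (hz u))).symm

lemma count_take_getElem {O O₂ : AcyclicOrientation G} {l : List V} (h : ClickSeq O l O₂)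
    (i : Fin l.length) {u : V} :
    (O.dir u l[i] → (l.take i).count u = (l.take i).count l[i] + 1) ∧
      (O.dir l[i] u → (l.take i).count u = (l.take i).count l[i]) := by
  obtain ⟨Q, hQ, hR⟩ := h.exists_take_drop i
  rw [List.drop_eq_getElem_cons i.isLt] at hR
  obtain _ | ⟨hc, -⟩ := hR
  exact hQ.count_of_isSource hc.1

lemma dir_of_adj_of_count_take_eq_zero {O O₂ : AcyclicOrientation G} {l : List V}
    (h : ClickSeq O l O₂) {i j : Fin l.length} (hij : i < j) (hj : (l.take j).count l[j] = 0)
    (hadj : G.Adj l[i] l[j]) : O.dir l[i] l[j] ∧ (l.take i).count l[i] = 0 := by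
  have hlt : (l.take i).count l[i] < (l.take j).count l[i] :=
    List.count_take_lt_count_take i.isLt hij
  rcases O.total hadj with hd | hd
  · have := (h.count_take_getElem j).1 hd
    exact ⟨hd, by omega⟩
  · have := (h.count_take_getElem j).2 hd
    omega

end ClickSeq

variable {O O₂ : AcyclicOrientation G} {v w : V} {l : List V}

def IsLeadingClick (O : AcyclicOrientation G) (v w : V) (l : List V) (i : Fin l.length) : Prop :=
  l[i] ∉ O.interval v w ∧ Relation.ReflTransGen O.dir l[i] w ∧ (l.take i).count l[i] = 0

lemma count_take_eq_zero_of_mem_interval (h : ClickSeq O l O₂) (hd : O.dir v w)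
    (hw : l.count w = 1)
    (hafter : ∀ i j : Fin l.length, i < j → l.get i = w → l.get j ∉ interval O v w)
    {j : Fin l.length} (hj : l[j] ∈ O.interval v w) : (l.take j).count l[j] = 0 := by
  obtain ⟨k, hk, hkw⟩ := List.mem_iff_getElem.mp (List.count_pos_iff.mp (hw ▸ Nat.one_pos))
  have hw0 : (l.take k).count w = 0 := by
    have := List.count_take_lt_count_take hk (j := l.length) hk
    rw [List.take_length, hkw] at this
    omega
  -- interval vertices are clicked at most as often as `v`, which is clicked once before `w`
  have hv1 : (l.take k).count v = 1 := by
    have := (h.count_take_getElem ⟨k, hk⟩ (u := v)).1 (by simpa [hkw] using hd)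
    simp only [Fin.getElem_fin, hkw] at this
    omega
  rcases lt_trichotomy j.val k with hjk | hjk | hkj
  · obtain ⟨Q, hQ, -⟩ := h.exists_take_drop k
    have h₁ : (l.take k).count l[j] ≤ (l.take k).count v :=
      hQ.count_le_count_of_reflTransGen_s11 hj.1
    have h₂ : (l.take j).count l[j] < (l.take k).count l[j] :=
      List.count_take_lt_count_take j.isLt hjk
    omega
  · obtain ⟨j, hj'⟩ := j
    subst hjk
    exact hkw ▸ hw0
  · exact absurd hj (hafter ⟨k, hk⟩ j hkj (by simpa using hkw))

lemma ne_and_not_adj_of_isLeadingClick (h : ClickSeq O l O₂) {i j : Fin l.length} (hij : i < j)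
    (hi : ¬ O.IsLeadingClick v w l i) (hj : O.IsLeadingClick v w l j) :
    l[j] ≠ l[i] ∧ ¬ G.Adj l[i] l[j] := by
  obtain ⟨hjI, hjw, hj0⟩ := hj
  refine ⟨fun he => ?_, fun hadj => ?_⟩
  · have : (l.take i).count l[i] < (l.take j).count l[i] :=
      List.count_take_lt_count_take i.isLt hij
    rw [he] at hj0
    omega
  obtain ⟨hd, hi0⟩ := h.dir_of_adj_of_count_take_eq_zero hij hj0 hadj
  exact hi ⟨fun hiI => hjI ⟨hiI.1.tail hd, hjw⟩, .head hd hjw, hi0⟩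

lemma ne_and_not_adj_of_mem_interval (h : ClickSeq O l O₂) {i j : Fin l.length} (hij : i < j)
    (hi : ¬ O.IsLeadingClick v w l i) (hiI : l[i] ∉ O.interval v w)
    (hjI : l[j] ∈ O.interval v w) (hj0 : (l.take j).count l[j] = 0) :
    l[j] ≠ l[i] ∧ ¬ G.Adj l[i] l[j] := by
  refine ⟨fun he => hiI (he ▸ hjI), fun hadj => ?_⟩
  obtain ⟨hd, hi0⟩ := h.dir_of_adj_of_count_take_eq_zero hij hj0 hadj
  exact hi ⟨hiI, .head hd hjI.2, hi0⟩

open Classical in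
noncomputable def intervalRearrangement (O : AcyclicOrientation G) (v w : V) (l : List V) :
    List V :=
  let rest := (List.finRange l.length).filter fun i => !decide (O.IsLeadingClick v w l i)
  ((List.finRange l.length).filter fun i => decide (O.IsLeadingClick v w l i)).map l.get ++
    ((rest.filter fun i => decide (l[i] ∈ O.interval v w)).map l.get ++
      (rest.filter fun i => !decide (l[i] ∈ O.interval v w)).map l.get)

lemma length_intervalRearrangement : (O.intervalRearrangement v w l).length = l.length := by
  classical
  simp only [intervalRearrangement, List.length_append, List.length_map]
  rw [← List.length_eq_length_filter_add, ← List.length_eq_length_filter_add,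
    List.length_finRange]

lemma clickSeq_intervalRearrangement (h : ClickSeq O l O₂) (hd : O.dir v w)
    (hw : l.count w = 1)
    (hafter : ∀ i j : Fin l.length, i < j → l.get i = w → l.get j ∉ interval O v w) :
    ClickSeq O (O.intervalRearrangement v w l) O₂ := by
  classical
  have hlt := List.pairwise_lt_finRange l.length
  obtain ⟨Q, hX, hR⟩ := (ClickSeq.map_filter_append l.get
    (fun i => decide (O.IsLeadingClick v w l i))
    (hlt.imp fun hij => by
      simpa using ne_and_not_adj_of_isLeadingClick h hij)
    ((List.map_get_finRange l).symm ▸ h)).exists_of_append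
  refine hX.append (ClickSeq.map_filter_append l.get (fun i => decide (l[i] ∈ O.interval v w))
    (List.pairwise_filter.mpr (hlt.imp fun hij => ?_)) hR)
  simp only [Bool.not_eq_eq_eq_not, Bool.not_true, decide_eq_false_iff_not, Fin.getElem_fin,
    decide_eq_true_eq, List.get_eq_getElem, ne_eq]
  intro hi _ hiI hjI
  exact ne_and_not_adj_of_mem_interval h hij hi hiI hjI
    (count_take_eq_zero_of_mem_interval h hd hw hafter hjI)

lemma exists_interval_intervalRearrangement :
    ∃ p q : ℕ, ∀ j : Fin (O.intervalRearrangement v w l).length,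
      ((O.intervalRearrangement v w l).get j ∈ interval O v w ↔
        p ≤ j.val ∧ j.val ≤ q) := by
  classical
  apply List.exists_interval_of_append <;> intro x hx <;>
    obtain ⟨i, hi, rfl⟩ := List.mem_map.mp hx <;>
    simp only [Fin.getElem_fin, List.filter_filter, List.mem_filter, List.mem_finRange,
      Bool.and_eq_true, decide_eq_true_eq, Bool.not_eq_eq_eq_not, Bool.not_true,
      decide_eq_false_iff_not, true_and] at hi
  exacts [hi.1, hi.1, hi.1]

end Count

end AcyclicOrientation

theorem interval_block_rearrangement_general [DecidableEq V] (G : SimpleGraph V)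
    (v w : V) (O O₂ : AcyclicOrientation G) (hd : O.dir v w)
    (c : List V) (h : ClickSeq O c O₂)
    (hw : c.count w = 1)
    (hafter : ∀ i j : Fin c.length, i < j → c.get i = w → c.get j ∉ interval O v w) :
    ∃ c' : List V, c'.length = c.length ∧ ClickSeq O c' O₂ ∧
      ∃ p q : ℕ, ∀ j : Fin c'.length,
        (c'.get j ∈ interval O v w ↔ (p ≤ j.val ∧ j.val ≤ q)) :=
  ⟨_, length_intervalRearrangement, clickSeq_intervalRearrangement h hd hw hafter,
    exists_interval_intervalRearrangement⟩

/-- A click-sequence with exactly one occurrence of `w` (and no interval vertices afterwards) can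
be rearranged, with the same image, so that the interval vertices occupy consecutive positions. -/
theorem interval_block_rearrangement [Fintype V] [DecidableEq V] (G : SimpleGraph V)
    (v w : V) (hvw : G.Adj v w) (O O₂ : AcyclicOrientation G) (hd : O.dir v w)
    (c : List V) (h : ClickSeq O c O₂)
    (hw : c.count w = 1)
    (hafter : ∀ i j : Fin c.length, i < j → c.get i = w → c.get j ∉ interval O v w) :
    ∃ c' : List V, c'.length = c.length ∧ ClickSeq O c' O₂ ∧
      ∃ p q : ℕ, ∀ j : Fin c'.length,
        (c'.get j ∈ interval O v w ↔ (p ≤ j.val ∧ j.val ≤ q)) :=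
  interval_block_rearrangement_general G v w O O₂ hd c h hw hafter
end
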